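/- arXiv:2503.23527 — 2 statements merged into one kernel-verified Lean document; each statement's English description precedes it below -/
import Mathlib

section
/- Explicit Green's function: for λ > -ω_0² (real), with ξ = 1 + (λ+ω_0²)/2 + (1/2)√((λ+ω_0²)(λ+ω_0²+4)), one has G_λ(x) = ξ^{-|x|}/√((λ+ω_0²)(λ+ω_0²+4)) for all x ∈ ℤ, where G_λ(x) = ∫_0^1 cos(2πux)/(λ + 4sin²(πu) + ω_0²) du. In particular ξ > 1 and G_λ decays exponentially in |x|. -/
/-!
With `r = ξ⁻¹`, i.e. `λ + ω₀² = ξ + ξ⁻¹ - 2`, one has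
`r (λ + ω₀² + 4 sin²(πu)) = 1 - 2 r cos(2πu) + r² = |e^{2πiu} - r|²` and `1 - r² = r (ξ - ξ⁻¹)`,
so the integrand of `G_λ` is `(ξ - ξ⁻¹)⁻¹` times the Poisson kernel `P_r(2πu)` times
`cos(2πux)`. The Poisson integral formula applied to `z ↦ z^n` at the point `r` says that the
`n`-th Fourier coefficient of `P_r` is `r^n`, which gives `G_λ(x) = ξ^{-|x|} / (ξ - ξ⁻¹)`.
-/

open Real

lemma norm_exp_mul_I_sub_ofReal_sq (r θ : ℝ) :
    ‖Complex.exp (θ * Complex.I) - r‖ ^ 2 = 1 - 2 * r * cos θ + r ^ 2 := by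
  rw [← Complex.normSq_eq_norm_sq, Complex.normSq_apply]
  simp only [Complex.sub_re, Complex.sub_im, Complex.exp_ofReal_mul_I_re,
    Complex.exp_ofReal_mul_I_im, Complex.ofReal_re, Complex.ofReal_im, sub_zero]
  linear_combination sin_sq_add_cos_sq θ

lemma one_sub_two_mul_cos_add_sq_pos {r : ℝ} (hr : |r| < 1) (θ : ℝ) :
    0 < 1 - 2 * r * cos θ + r ^ 2 := by
  have h : r * cos θ ≤ |r| := (le_abs_self _).trans <| by
    rw [abs_mul]; exact mul_le_of_le_one_right (abs_nonneg r) (abs_cos_le_one θ)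
  nlinarith [sq_abs r, abs_nonneg r]

lemma cos_mul_natAbs (x : ℝ) (n : ℤ) : cos (x * n.natAbs) = cos (x * n) := by
  rcases Int.natAbs_eq n with h | h
  · rw [h]; simp
  · conv_rhs => rw [h]
    simp [cos_neg]

theorem integral_poissonKernel_mul_cos {r : ℝ} (hr : |r| < 1) (n : ℕ) :
    ∫ θ in (0:ℝ)..2 * π, (1 - r ^ 2) / (1 - 2 * r * cos θ + r ^ 2) * cos (n * θ)
      = 2 * π * r ^ n := by
  set P : ℝ → ℝ := fun θ => (1 - r ^ 2) / (1 - 2 * r * cos θ + r ^ 2)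
  have hP : Continuous P :=
    continuous_const.div (by fun_prop) fun θ => (one_sub_two_mul_cos_add_sq_pos hr θ).ne'
  have hpoisson := (differentiable_pow (𝕜 := ℂ) n).diffContOnCl.circleAverage_poissonKernel_smul'
    (c := 0) (R := 1) (w := (r : ℂ)) (by simpa using hr)
  have hkernel : ∀ θ : ℝ, ((‖circleMap 0 1 θ - 0‖ ^ 2 - ‖(r : ℂ) - 0‖ ^ 2) /
      ‖circleMap 0 1 θ - 0 - ((r : ℂ) - 0)‖ ^ 2) • circleMap 0 1 θ ^ n
      = (P θ : ℂ) * Complex.exp ((n * θ : ℝ) * Complex.I) := by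
    intro θ
    simp only [P, circleMap_zero, Complex.ofReal_one, one_mul, sub_zero,
      Complex.norm_exp_ofReal_mul_I, Complex.norm_real, norm_eq_abs, sq_abs,
      norm_exp_mul_I_sub_ofReal_sq, ← Complex.exp_nat_mul, Complex.real_smul]
    push_cast; ring_nf
  rw [circleAverage_def, intervalIntegral.integral_congr fun θ _ => hkernel θ] at hpoisson
  have hre : (∫ θ in (0:ℝ)..2 * π, (P θ : ℂ) * Complex.exp ((n * θ : ℝ) * Complex.I)).re
      = ∫ θ in (0:ℝ)..2 * π, P θ * cos (n * θ) := by
    rw [← Complex.reCLM_apply, ← ContinuousLinearMap.intervalIntegral_comp_comm _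
      ((by fun_prop : Continuous _).intervalIntegrable _ _)]
    simp only [Complex.reCLM_apply, Complex.re_ofReal_mul, Complex.exp_ofReal_mul_I_re]
  have h := congrArg Complex.re hpoisson
  rw [Complex.real_smul, Complex.re_ofReal_mul, hre, ← Complex.ofReal_pow,
    Complex.ofReal_re] at h
  rw [← h, mul_inv_cancel_left₀ two_pi_pos.ne']

theorem integral_unitInterval_poissonKernel_mul_cos {r : ℝ} (hr : |r| < 1) (n : ℕ) :
    ∫ u in (0:ℝ)..1, (1 - r ^ 2) / (1 - 2 * r * cos (2 * π * u) + r ^ 2) * cos (2 * π * u * n)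
      = r ^ n := by
  have h := intervalIntegral.integral_comp_mul_left
    (fun θ => (1 - r ^ 2) / (1 - 2 * r * cos θ + r ^ 2) * cos (n * θ)) two_pi_pos.ne'
    (a := 0) (b := 1)
  simp only [mul_zero, mul_one, integral_poissonKernel_mul_cos hr, smul_eq_mul] at h
  simp only [mul_comm _ (n : ℝ), h]
  field_simp

theorem integral_cos_div_add_four_sin_sq {ξ : ℝ} (hξ : 1 < ξ) (n : ℤ) :
    ∫ u in (0:ℝ)..1, cos (2 * π * u * n) / (ξ + ξ⁻¹ - 2 + 4 * sin (π * u) ^ 2)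
      = ξ ^ (-|n|) / (ξ - ξ⁻¹) := by
  set r := ξ⁻¹
  have hr0 : 0 < r := inv_pos.2 (zero_lt_one.trans hξ)
  have hr : |r| < 1 := abs_lt.2 ⟨by linarith, inv_lt_one_of_one_lt₀ hξ⟩
  have hrξ : r * ξ = 1 := inv_mul_cancel₀ (zero_lt_one.trans hξ).ne'
  have hξr : ξ - r ≠ 0 := by linarith [(abs_lt.1 hr).2]
  have hden : ∀ u : ℝ, 1 - 2 * r * cos (2 * π * u) + r ^ 2
      = r * (ξ + r - 2 + 4 * sin (π * u) ^ 2) := by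
    intro u
    rw [show 2 * π * u = 2 * (π * u) by ring, cos_two_mul, cos_sq']
    linear_combination -hrξ
  have hpoisson : ∀ u : ℝ, cos (2 * π * u * n) / (ξ + r - 2 + 4 * sin (π * u) ^ 2)
      = (ξ - r)⁻¹ * ((1 - r ^ 2) / (1 - 2 * r * cos (2 * π * u) + r ^ 2)
        * cos (2 * π * u * n.natAbs)) := by
    intro u
    have hQ := one_sub_two_mul_cos_add_sq_pos hr (2 * π * u)
    rw [hden] at hQ ⊢
    have hD := (pos_of_mul_pos_right hQ hr0.le).ne'
    rw [cos_mul_natAbs]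
    field_simp
    linear_combination cos (2 * π * u * n) * hrξ
  rw [intervalIntegral.integral_congr fun u _ => hpoisson u, intervalIntegral.integral_const_mul,
    integral_unitInterval_poissonKernel_mul_cos hr, Int.abs_eq_natAbs, zpow_neg, zpow_natCast,
    inv_pow, inv_mul_eq_div]

theorem green_function_explicit_general (ω0 lam : ℝ) (hl : 0 < lam + ω0 ^ 2) :
    1 < 1 + (lam + ω0 ^ 2) / 2 + Real.sqrt ((lam + ω0 ^ 2) * (lam + ω0 ^ 2 + 4)) / 2 ∧
    ∀ x : ℤ,
      (∫ u in (0 : ℝ)..1, Real.cos (2 * Real.pi * u * (x : ℝ)) /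
          (lam + 4 * Real.sin (Real.pi * u) ^ 2 + ω0 ^ 2)) =
        (1 + (lam + ω0 ^ 2) / 2 + Real.sqrt ((lam + ω0 ^ 2) * (lam + ω0 ^ 2 + 4)) / 2)
            ^ (-(|x| : ℤ)) /
          Real.sqrt ((lam + ω0 ^ 2) * (lam + ω0 ^ 2 + 4)) := by
  set m := lam + ω0 ^ 2 with hm
  set s := √(m * (m + 4))
  set ξ := 1 + m / 2 + s / 2 with hξ_def
  have hs : s ^ 2 = m * (m + 4) := sq_sqrt (by positivity)
  have hξ : 1 < ξ := by linarith [hξ_def, sqrt_nonneg (m * (m + 4))]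
  have hξinv : ξ⁻¹ = 1 + m / 2 - s / 2 :=
    inv_eq_of_mul_eq_one_right (by linear_combination -hs / 4)
  have hsum : ξ + ξ⁻¹ - 2 = m := by rw [hξinv]; ring
  have hdiff : ξ - ξ⁻¹ = s := by rw [hξinv]; ring
  refine ⟨hξ, fun x => ?_⟩
  rw [← hdiff, ← integral_cos_div_add_four_sin_sq hξ x, hsum]
  refine intervalIntegral.integral_congr fun u _ => ?_
  rw [hm]; ring

/-- Explicit Green's function of the infinite pinned chain: for real `λ` with
`λ + ω₀² > 0` and `ξ = 1 + (λ+ω₀²)/2 + √((λ+ω₀²)(λ+ω₀²+4))/2`, one has `ξ > 1` and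
`∫₀¹ cos(2πux)/(λ + 4sin²(πu) + ω₀²) du = ξ^{-|x|} / √((λ+ω₀²)(λ+ω₀²+4))` on `ℤ`;
in particular `G_λ` decays exponentially in `|x|`. -/
theorem green_function_explicit (ω0 lam : ℝ) (h0 : 0 < ω0) (hl : 0 < lam + ω0 ^ 2) :
    1 < 1 + (lam + ω0 ^ 2) / 2 + Real.sqrt ((lam + ω0 ^ 2) * (lam + ω0 ^ 2 + 4)) / 2 ∧
    ∀ x : ℤ,
      (∫ u in (0 : ℝ)..1, Real.cos (2 * Real.pi * u * (x : ℝ)) /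
          (lam + 4 * Real.sin (Real.pi * u) ^ 2 + ω0 ^ 2)) =
        (1 + (lam + ω0 ^ 2) / 2 + Real.sqrt ((lam + ω0 ^ 2) * (lam + ω0 ^ 2 + 4)) / 2)
            ^ (-(|x| : ℤ)) /
          Real.sqrt ((lam + ω0 ^ 2) * (lam + ω0 ^ 2 + 4)) :=
  green_function_explicit_general ω0 lam hl
end

section
/- Perturbative contraction: suppose ω, ω_0 > 0 with δ_* = inf{|(mω)² - w²| : m ∈ ℤ, w ∈ [ω_0, √(ω_0²+4)]} > 0, and let q, v : Z_N → ℂ (for fixed m ∈ ℤ) satisfy [Δ + (mω)² - ω_0² - iγmω(δ_{-N} + δ_N)] q_x = v_x for all x ∈ Z_N (Neumann Laplacian, γ ≥ 0). Then δ_* · ∑_{x∈Z_N} |q_x|² ≤ (∑_x |v_x|²)^{1/2} (∑_x |q_x|²)^{1/2}, i.e. ‖q‖ ≤ ‖v‖/δ_*. -/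
/-!
Pair the equation with `q̄` and take real parts. Summation by parts under the Neumann condition
turns `∑ (Δq) q̄` into `-D` with `D = ∑ |q_{x+1} - q_x|² ∈ [0, 4‖q‖²]`, and the friction term is
purely imaginary, so `Re ⟨v, q⟩ = ((mω)² - w²) ‖q‖²` with `w² = ω₀² + D / ‖q‖²`. As
`w ∈ [ω₀, √(ω₀² + 4)]`, the factor is at least `δ_*` in absolute value, and Cauchy–Schwarz bounds
`|⟨v, q⟩|` by `‖v‖ ‖q‖`.
-/

open Finset

variable {𝕜 : Type*} [RCLike 𝕜]

theorem sum_Icc_laplacian_mul_conj (q : ℤ → 𝕜) {a b : ℤ} (hab : a ≤ b) :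
    ∑ x ∈ Icc a b, (q (x + 1) + q (x - 1) - 2 * q x) * starRingEnd 𝕜 (q x) =
      (q (b + 1) - q b) * starRingEnd 𝕜 (q b) - (q a - q (a - 1)) * starRingEnd 𝕜 (q a)
        - ∑ x ∈ Ico a b, (‖q (x + 1) - q x‖ ^ 2 : 𝕜) := by
  induction b, hab using Int.leInduction with
  | base => simp only [Icc_self, sum_singleton, Ico_self, sum_empty]; ring
  | succ b hab ih =>
    rw [← insert_Icc_right_eq_Icc_add_one (by omega), sum_insert (by simp), ih,
      ← insert_Ico_right_eq_Ico_add_one hab, sum_insert (by simp), ← RCLike.mul_conj, map_sub,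
      add_sub_cancel_right]
    ring

theorem sum_Icc_laplacian_mul_conj_of_neumann (q : ℤ → 𝕜) {a b : ℤ} (hab : a ≤ b)
    (ha : q (a - 1) = q a) (hb : q (b + 1) = q b) :
    ∑ x ∈ Icc a b, (q (x + 1) + q (x - 1) - 2 * q x) * starRingEnd 𝕜 (q x) =
      -∑ x ∈ Ico a b, (‖q (x + 1) - q x‖ ^ 2 : 𝕜) := by
  rw [sum_Icc_laplacian_mul_conj q hab, ha, hb]
  ring

theorem sum_Ico_norm_sub_sq_le {E : Type*} [SeminormedAddCommGroup E] (q : ℤ → E) (a b : ℤ) :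
    ∑ x ∈ Ico a b, ‖q (x + 1) - q x‖ ^ 2 ≤ 4 * ∑ x ∈ Icc a b, ‖q x‖ ^ 2 := by
  have hshift : ∑ x ∈ Ico a b, ‖q (x + 1)‖ ^ 2 ≤ ∑ x ∈ Icc a b, ‖q x‖ ^ 2 := by
    rw [sum_Ico_add' (fun x => ‖q x‖ ^ 2)]
    exact sum_le_sum_of_subset_of_nonneg
      (fun x hx => by simp only [mem_Ico, mem_Icc] at hx ⊢; omega) fun _ _ _ => by positivity
  have hrest : ∑ x ∈ Ico a b, ‖q x‖ ^ 2 ≤ ∑ x ∈ Icc a b, ‖q x‖ ^ 2 :=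
    sum_le_sum_of_subset_of_nonneg Ico_subset_Icc_self fun _ _ _ => by positivity
  calc ∑ x ∈ Ico a b, ‖q (x + 1) - q x‖ ^ 2
      ≤ ∑ x ∈ Ico a b, (2 * ‖q (x + 1)‖ ^ 2 + 2 * ‖q x‖ ^ 2) := by
        refine sum_le_sum fun x _ => ?_
        have := norm_sub_le (q (x + 1)) (q x)
        nlinarith [norm_nonneg (q (x + 1) - q x), sq_nonneg (‖q (x + 1)‖ - ‖q x‖)]
    _ = 2 * ∑ x ∈ Ico a b, ‖q (x + 1)‖ ^ 2 + 2 * ∑ x ∈ Ico a b, ‖q x‖ ^ 2 := by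
        rw [sum_add_distrib, mul_sum, mul_sum]
    _ ≤ 4 * ∑ x ∈ Icc a b, ‖q x‖ ^ 2 := by linarith

theorem re_sum_mul_conj_of_neumann (q v : ℤ → ℂ) (μ : ℝ) (β : ℤ → ℝ) {a b : ℤ} (hab : a ≤ b)
    (ha : q (a - 1) = q a) (hb : q (b + 1) = q b)
    (heq : ∀ x ∈ Icc a b,
      (q (x + 1) + q (x - 1) - 2 * q x) + μ * q x - Complex.I * β x * q x = v x) :
    (∑ x ∈ Icc a b, v x * starRingEnd ℂ (q x)).re =
      μ * ∑ x ∈ Icc a b, ‖q x‖ ^ 2 - ∑ x ∈ Ico a b, ‖q (x + 1) - q x‖ ^ 2 := by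
  have hpair : ∀ x ∈ Icc a b, v x * starRingEnd ℂ (q x) =
      (q (x + 1) + q (x - 1) - 2 * q x) * starRingEnd ℂ (q x)
        + ((μ * ‖q x‖ ^ 2 : ℝ) : ℂ) - Complex.I * ((β x * ‖q x‖ ^ 2 : ℝ) : ℂ) := by
    intro x hx
    rw [← heq x hx]
    push_cast
    rw [← Complex.mul_conj']
    ring
  have hsum : ∑ x ∈ Icc a b, v x * starRingEnd ℂ (q x) =
      ((μ * ∑ x ∈ Icc a b, ‖q x‖ ^ 2 - ∑ x ∈ Ico a b, ‖q (x + 1) - q x‖ ^ 2 : ℝ) : ℂ)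
        - Complex.I * ((∑ x ∈ Icc a b, β x * ‖q x‖ ^ 2 : ℝ) : ℂ) := by
    rw [sum_congr rfl hpair, sum_sub_distrib, sum_add_distrib,
      sum_Icc_laplacian_mul_conj_of_neumann q hab ha hb]
    push_cast [Complex.coe_algebraMap, mul_sum]
    ring
  rw [hsum, Complex.sub_re, Complex.ofReal_re, Complex.I_mul_re, Complex.ofReal_im, neg_zero,
    sub_zero]

theorem norm_sum_mul_conj_le {ι : Type*} (s : Finset ι) (v q : ι → 𝕜) :
    ‖∑ x ∈ s, v x * starRingEnd 𝕜 (q x)‖ ≤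
      √(∑ x ∈ s, ‖v x‖ ^ 2) * √(∑ x ∈ s, ‖q x‖ ^ 2) :=
  calc ‖∑ x ∈ s, v x * starRingEnd 𝕜 (q x)‖ ≤ ∑ x ∈ s, ‖v x‖ * ‖q x‖ := by
        simpa only [norm_mul, RCLike.norm_conj] using
          norm_sum_le s fun x => v x * starRingEnd 𝕜 (q x)
    _ ≤ _ := Real.sum_mul_le_sqrt_mul_sqrt s _ _

theorem sInf_le_abs_sq_sub (ω ω0 r : ℝ) (m : ℤ) (hr : r ∈ Set.Icc 0 4) :
    sInf {d : ℝ | ∃ m : ℤ, ∃ w ∈ Set.Icc ω0 √(ω0 ^ 2 + 4), d = |((m : ℝ) * ω) ^ 2 - w ^ 2|} ≤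
      |((m : ℝ) * ω) ^ 2 - ω0 ^ 2 - r| := by
  refine csInf_le ⟨0, ?_⟩ ⟨m, √(ω0 ^ 2 + r), ⟨?_, ?_⟩, ?_⟩
  · rintro _ ⟨_, _, _, rfl⟩
    exact abs_nonneg _
  · exact (le_abs_self ω0).trans (Real.abs_le_sqrt (by linarith [hr.1]))
  · exact Real.sqrt_le_sqrt (by linarith [hr.2])
  · rw [Real.sq_sqrt (by nlinarith [hr.1, sq_nonneg ω0]), sub_sub]

theorem mul_le_abs_mul_sub {δ μ Q D : ℝ} (hgap : ∀ r ∈ Set.Icc (0 : ℝ) 4, δ ≤ |μ - r|)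
    (hD : 0 ≤ D) (hDQ : D ≤ 4 * Q) : δ * Q ≤ |μ * Q - D| := by
  rcases (show 0 ≤ Q by linarith).eq_or_lt with rfl | hQ
  · simp [le_antisymm (by linarith) hD]
  · calc δ * Q ≤ |μ - D / Q| * Q :=
          mul_le_mul_of_nonneg_right (hgap _ ⟨by positivity, (div_le_iff₀ hQ).2 hDQ⟩) hQ.le
      _ = |μ * Q - D| := by
          rw [← abs_of_pos hQ, ← abs_mul, abs_of_pos hQ, sub_mul, div_mul_cancel₀ _ hQ.ne']

theorem perturbative_contraction_general (N : ℕ) (ω ω0 γ : ℝ)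
    (δstar : ℝ)
    (hδdef : δstar = sInf {d : ℝ | ∃ m : ℤ, ∃ w ∈ Set.Icc ω0 (Real.sqrt (ω0 ^ 2 + 4)),
        d = |((m : ℝ) * ω) ^ 2 - w ^ 2|})
    (m : ℤ) (q v : ℤ → ℂ)
    (hqR : q ((N : ℤ) + 1) = q (N : ℤ)) (hqL : q (-(N : ℤ) - 1) = q (-(N : ℤ)))
    (heq : ∀ x ∈ Finset.Icc (-(N : ℤ)) (N : ℤ),
      (q (x + 1) + q (x - 1) - 2 * q x)
        + ((((m : ℝ) * ω) ^ 2 - ω0 ^ 2 : ℝ) : ℂ) * q x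
        - Complex.I * (γ : ℂ) * (m : ℂ) * (ω : ℂ) *
            (((if x = -(N : ℤ) then 1 else 0) + (if x = (N : ℤ) then 1 else 0) : ℂ)) * q x
      = v x) :
    δstar * ∑ x ∈ Finset.Icc (-(N : ℤ)) (N : ℤ), ‖q x‖ ^ 2 ≤
      Real.sqrt (∑ x ∈ Finset.Icc (-(N : ℤ)) (N : ℤ), ‖v x‖ ^ 2) *
      Real.sqrt (∑ x ∈ Finset.Icc (-(N : ℤ)) (N : ℤ), ‖q x‖ ^ 2) := by
  have hgap : ∀ r ∈ Set.Icc (0 : ℝ) 4, δstar ≤ |((m : ℝ) * ω) ^ 2 - ω0 ^ 2 - r| := fun r hr =>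
    hδdef ▸ sInf_le_abs_sq_sub ω ω0 r m hr
  have hre := re_sum_mul_conj_of_neumann q v (((m : ℝ) * ω) ^ 2 - ω0 ^ 2)
    (fun x => γ * m * ω * ((if x = -(N : ℤ) then 1 else 0) + (if x = (N : ℤ) then 1 else 0)))
    (by omega) hqL hqR fun x hx => by rw [← heq x hx]; push_cast [apply_ite]; ring_nf
  calc δstar * ∑ x ∈ Icc (-(N : ℤ)) N, ‖q x‖ ^ 2
      ≤ |(((m : ℝ) * ω) ^ 2 - ω0 ^ 2) * ∑ x ∈ Icc (-(N : ℤ)) N, ‖q x‖ ^ 2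
          - ∑ x ∈ Ico (-(N : ℤ)) N, ‖q (x + 1) - q x‖ ^ 2| :=
        mul_le_abs_mul_sub hgap (sum_nonneg fun _ _ => by positivity)
          (sum_Ico_norm_sub_sq_le q _ _)
    _ = |(∑ x ∈ Icc (-(N : ℤ)) N, v x * starRingEnd ℂ (q x)).re| := by rw [hre]
    _ ≤ ‖∑ x ∈ Icc (-(N : ℤ)) N, v x * starRingEnd ℂ (q x)‖ := Complex.abs_re_le_norm _
    _ ≤ _ := norm_sum_mul_conj_le _ _ _

/-- Perturbative contraction: suppose `δ_* = inf {|(mω)² - w²| : m ∈ ℤ, w ∈ [ω₀, √(ω₀²+4)]}`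
is positive, and `q, v : Z_N → ℂ` satisfy, for a fixed `m ∈ ℤ`,
`[Δ + (mω)² - ω₀² - iγmω(δ_{-N} + δ_N)] q = v` on `Z_N` (Neumann Laplacian, `γ ≥ 0`).
Then `δ_* ∑ |q_x|² ≤ (∑ |v_x|²)^{1/2} (∑ |q_x|²)^{1/2}`. -/
theorem perturbative_contraction (N : ℕ) (ω ω0 γ : ℝ)
    (hω : 0 < ω) (h0 : 0 < ω0) (hγ : 0 ≤ γ)
    (δstar : ℝ)
    (hδdef : δstar = sInf {d : ℝ | ∃ m : ℤ, ∃ w ∈ Set.Icc ω0 (Real.sqrt (ω0 ^ 2 + 4)),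
        d = |((m : ℝ) * ω) ^ 2 - w ^ 2|})
    (hδ : 0 < δstar)
    (m : ℤ) (q v : ℤ → ℂ)
    (hqR : q ((N : ℤ) + 1) = q (N : ℤ)) (hqL : q (-(N : ℤ) - 1) = q (-(N : ℤ)))
    (heq : ∀ x ∈ Finset.Icc (-(N : ℤ)) (N : ℤ),
      (q (x + 1) + q (x - 1) - 2 * q x)
        + ((((m : ℝ) * ω) ^ 2 - ω0 ^ 2 : ℝ) : ℂ) * q x
        - Complex.I * (γ : ℂ) * (m : ℂ) * (ω : ℂ) *
            (((if x = -(N : ℤ) then 1 else 0) + (if x = (N : ℤ) then 1 else 0) : ℂ)) * q x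
      = v x) :
    δstar * ∑ x ∈ Finset.Icc (-(N : ℤ)) (N : ℤ), ‖q x‖ ^ 2 ≤
      Real.sqrt (∑ x ∈ Finset.Icc (-(N : ℤ)) (N : ℤ), ‖v x‖ ^ 2) *
      Real.sqrt (∑ x ∈ Finset.Icc (-(N : ℤ)) (N : ℤ), ‖q x‖ ^ 2) :=
  perturbative_contraction_general N ω ω0 γ δstar hδdef m q v hqR hqL heq
end
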